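/- The intertwining sequence of the factor 11 = t[1..2] in the Thue-Morse word is (AB)^ω: listing all occurrences of 11 and 00 in increasing order of position, they strictly alternate starting with 11. -/

import Mathlib

open scoped Classical

/-- The Thue-Morse word: parity of the binary digit sum. -/
def tm (n : ℕ) : ℕ := (Nat.digits 2 n).sum % 2

/-- `t[j..j+n-1] = t[i..i+n-1]` : an occurrence at `j` of the factor `t[i..i+n-1]`. -/
def feq (i j n : ℕ) : Prop := ∀ k < n, tm (j + k) = tm (i + k)

/-- `t[j..j+n-1]` is the binary complement of `t[i..i+n-1]`. -/
def feqc (i j n : ℕ) : Prop := ∀ k < n, tm (j + k) = 1 - tm (i + k)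

/-- Positions of occurrences of `x = t[i..i+n-1]` or its complement. -/
def occSet (i n : ℕ) : ℕ → Prop := fun j => feq i j n ∨ feqc i j n

/-- The intertwining sequence of `x = t[i..i+n-1]`: at index `m`, the label of the
`m`-th (in increasing order of position) occurrence of `x` or its complement;
`0` codes `A` (an occurrence of `x`), `1` codes `B` (an occurrence of the complement). -/
noncomputable def itw (i n m : ℕ) : ℕ :=
  if feq i (Nat.nth (occSet i n) m) n then 0 else 1

/-- The intertwining sequence is `(AB)^ω`. -/
def ABpat (i n : ℕ) : Prop := ∀ m, itw i n m = m % 2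

/-- The intertwining sequence is `(BA)^ω`. -/
def BApat (i n : ℕ) : Prop := ∀ m, itw i n m = (m + 1) % 2

/-- The intertwining sequence is `(ABBA)^ω`. -/
def ABBApat (i n : ℕ) : Prop :=
  ∀ m, itw i n m = if m % 4 = 0 ∨ m % 4 = 3 then 0 else 1

/-- The intertwining sequence is `(BAAB)^ω`. -/
def BAABpat (i n : ℕ) : Prop :=
  ∀ m, itw i n m = if m % 4 = 0 ∨ m % 4 = 3 then 1 else 0

/-- The length-`n` factor of the Thue-Morse word starting at position `i`, as a word. -/
def fac (i n : ℕ) : List ℕ := (List.range n).map (fun k => tm (i + k))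

lemma tm_le (n : ℕ) : tm n ≤ 1 := Nat.lt_succ_iff.mp (Nat.mod_lt _ (by norm_num))

lemma tm_two_mul (n : ℕ) : tm (2 * n) = tm n := by
  rcases Nat.eq_zero_or_pos n with h | h
  · simp [h]
  · unfold tm
    rw [Nat.digits_def' (by norm_num : (1:ℕ) < 2) (by omega)]
    have h1 : (2 * n) % 2 = 0 := by omega
    have h2 : (2 * n) / 2 = n := by omega
    rw [h1, h2, List.sum_cons]
    simp

lemma tm_two_mul_add_one (n : ℕ) : tm (2 * n + 1) = 1 - tm n := by
  unfold tm
  rw [Nat.digits_def' (by norm_num : (1:ℕ) < 2) (by omega)]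
  have h1 : (2 * n + 1) % 2 = 1 := by omega
  have h2 : (2 * n + 1) / 2 = n := by omega
  rw [h1, h2, List.sum_cons]
  omega

lemma tm_zero : tm 0 = 0 := by simp [tm]

lemma tm_one : tm 1 = 1 := by have := tm_two_mul_add_one 0; simpa [tm_zero] using this

lemma tm_two : tm 2 = 1 := by
  have := tm_two_mul 1
  norm_num at this
  rw [this, tm_one]

/-- The set of positions where `tm` changes value. -/
def Schg : ℕ → Prop := fun n => tm n ≠ tm (n + 1)

lemma Schg_even (n : ℕ) : Schg (2 * n) := by
  unfold Schg
  have h1 := tm_two_mul n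
  have h2 := tm_two_mul_add_one n
  have h3 := tm_le n
  omega

lemma Schg_infinite : (setOf Schg).Infinite :=
  Set.infinite_of_injective_forall_mem (f := fun n : ℕ => 2 * n)
    (fun a b h => by dsimp at h; omega) (fun n => Schg_even n)

lemma feq_iff (j : ℕ) : feq 1 j 2 ↔ tm j = 1 ∧ tm (j + 1) = 1 := by
  constructor
  · intro h
    have h0 := h 0 (by norm_num)
    have h1 := h 1 (by norm_num)
    norm_num [tm_one, tm_two] at h0 h1
    exact ⟨h0, h1⟩
  · rintro ⟨h0, h1⟩ k hk
    interval_cases k <;> simp [h0, h1, tm_one, tm_two]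

lemma feqc_iff (j : ℕ) : feqc 1 j 2 ↔ tm j = 0 ∧ tm (j + 1) = 0 := by
  constructor
  · intro h
    have h0 := h 0 (by norm_num)
    have h1 := h 1 (by norm_num)
    norm_num [tm_one, tm_two] at h0 h1
    exact ⟨h0, h1⟩
  · rintro ⟨h0, h1⟩ k hk
    interval_cases k <;> simp [h0, h1, tm_one, tm_two]

lemma occ_even (n : ℕ) : ¬ occSet 1 2 (2 * n) := by
  have h1 := tm_two_mul n
  have h2 := tm_two_mul_add_one n
  have h3 := tm_le n
  rintro (h | h)
  · rw [feq_iff] at h; omega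
  · rw [feqc_iff] at h; omega

lemma occ_odd (n : ℕ) : occSet 1 2 (2 * n + 1) ↔ Schg n := by
  have h1 := tm_two_mul_add_one n
  have h2 : tm (2 * n + 1 + 1) = tm (n + 1) := by
    have := tm_two_mul (n + 1); rw [← this]; ring_nf
  have h3 := tm_le n
  have h4 := tm_le (n + 1)
  unfold occSet Schg
  rw [feq_iff, feqc_iff]
  omega

lemma feq_odd (n : ℕ) : feq 1 (2 * n + 1) 2 ↔ (tm n = 0 ∧ tm (n + 1) = 1) := by
  have h1 := tm_two_mul_add_one n
  have h2 : tm (2 * n + 1 + 1) = tm (n + 1) := by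
    have := tm_two_mul (n + 1); rw [← this]; ring_nf
  have h3 := tm_le n
  rw [feq_iff]
  omega

lemma tm_const (a b : ℕ) (hab : a ≤ b) (h : ∀ k, a ≤ k → k < b → ¬ Schg k) :
    tm b = tm a := by
  induction b with
  | zero =>
    have : a = 0 := by omega
    rw [this]
  | succ b ih =>
    rcases Nat.lt_or_ge a (b + 1) with h' | h'
    · have hb : ¬ Schg b := h b (by omega) (by omega)
      unfold Schg at hb
      push_neg at hb
      rw [← hb]
      exact ih (by omega) (fun k hk hk' => h k hk (by omega))
    · have : a = b + 1 := by omega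
      rw [this]

lemma tm_nth_Schg (m : ℕ) : tm (Nat.nth Schg m) = m % 2 := by
  induction m with
  | zero =>
    have h0 : tm (Nat.nth Schg 0) = tm 0 := by
      apply tm_const 0 _ (Nat.zero_le _)
      intro k _ hk hS
      rw [Nat.nth_zero] at hk
      exact Nat.notMem_of_lt_sInf hk hS
    rw [h0, tm_zero]
  | succ m ih =>
    have hlt : Nat.nth Schg m < Nat.nth Schg (m + 1) :=
      (Nat.nth_lt_nth Schg_infinite).mpr (by omega)
    have hstep : tm (Nat.nth Schg (m + 1)) = tm (Nat.nth Schg m + 1) := by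
      apply tm_const _ _ (by omega)
      intro k hk hk' hS
      have heq := Nat.nth_count (p := Schg) hS
      have c1 : m < Nat.count Schg k := by
        rw [← Nat.nth_lt_nth Schg_infinite, heq]; omega
      have c2 : Nat.count Schg k < m + 1 := by
        rw [← Nat.nth_lt_nth Schg_infinite, heq]; omega
      omega
    have hmem : tm (Nat.nth Schg m) ≠ tm (Nat.nth Schg m + 1) :=
      Nat.nth_mem_of_infinite Schg_infinite m
    have h1 := tm_le (Nat.nth Schg m)
    have h2 := tm_le (Nat.nth Schg m + 1)
    rw [hstep]
    omega

lemma count_occ (k : ℕ) : Nat.count (occSet 1 2) (2 * k + 1) = Nat.count Schg k := by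
  induction k with
  | zero =>
    rw [Nat.count_succ]
    have : ¬ occSet 1 2 0 := by have := occ_even 0; simpa using this
    simp [this]
  | succ k ih =>
    have e1 : 2 * (k + 1) + 1 = (2 * k + 1) + 1 + 1 := by ring
    rw [e1, Nat.count_succ, Nat.count_succ, ih, Nat.count_succ]
    have h1 : ¬ occSet 1 2 (2 * k + 1 + 1) := by
      have e : 2 * k + 1 + 1 = 2 * (k + 1) := by ring
      rw [e]; exact occ_even (k + 1)
    have h2 : occSet 1 2 (2 * k + 1) ↔ Schg k := occ_odd k
    by_cases hS : Schg k
    · rw [if_pos (h2.mpr hS), if_neg h1, if_pos hS]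
    · rw [if_neg (fun h => hS (h2.mp h)), if_neg h1, if_neg hS]

lemma nth_occ (m : ℕ) : Nat.nth (occSet 1 2) m = 2 * Nat.nth Schg m + 1 := by
  have h1 : occSet 1 2 (2 * Nat.nth Schg m + 1) :=
    (occ_odd _).mpr (Nat.nth_mem_of_infinite Schg_infinite m)
  have h2 : Nat.count (occSet 1 2) (2 * Nat.nth Schg m + 1) = m := by
    rw [count_occ, Nat.count_nth_of_infinite Schg_infinite]
  conv_lhs => rw [← h2]
  exact Nat.nth_count h1

/-- The intertwining sequence of the factor 11 = t[1..2] is (AB)^ω. -/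
theorem tm_itw_11 : ABpat 1 2 := by
  intro m
  unfold itw
  rw [nth_occ]
  have h := tm_nth_Schg m
  have hS : tm (Nat.nth Schg m) ≠ tm (Nat.nth Schg m + 1) :=
    Nat.nth_mem_of_infinite Schg_infinite m
  have h1 := tm_le (Nat.nth Schg m)
  have h2 := tm_le (Nat.nth Schg m + 1)
  rcases Nat.even_or_odd m with he | ho
  · have hm : m % 2 = 0 := Nat.even_iff.mp he
    rw [if_pos ((feq_odd _).mpr (by omega))]
    omega
  · have hm : m % 2 = 1 := Nat.odd_iff.mp ho
    rw [if_neg (fun hc => by have := (feq_odd _).mp hc; omega)]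
    omega
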